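/- Under the hypotheses of the previous constraint, the Lagrange multiplier satisfies F⁻¹(1 − 1/A) / (1 + A·S·F⁻¹(1 − 1/A)) ≤ λ ≤ F⁻¹(1 − 1/A), where F⁻¹ is the inverse of the CDF F. -/

import Mathlib

open MeasureTheory Real Set Filter Topology

/-! The constraint integrand `min (max (1/λ - 1/H) 0) (A S)` vanishes where `H ≤ λ` and equals
its cap `A S` where `H > (1/λ - A S)⁻¹`. Hence `A S * P(H > (1/λ - A S)⁻¹) ≤ S ≤ A S * P(H > λ)`,
i.e. `F λ ≤ 1 - 1/A ≤ F (1/λ - A S)⁻¹`, and inverting the strictly increasing `F` gives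
`λ ≤ F⁻¹(1 - 1/A) ≤ (1/λ - A S)⁻¹`; the second inequality rearranges to the lower bound. -/

section Clipped

variable {lam c h : ℝ}

lemma clipped_eq_zero (hh : 0 < h) (hle : h ≤ lam) (hc : 0 ≤ c) :
    min (max (1 / lam - 1 / h) 0) c = 0 := by
  have : 1 / lam ≤ 1 / h := one_div_le_one_div_of_le hh hle
  rw [max_eq_right (by linarith), min_eq_left hc]

lemma clipped_eq_cap (hgap : 0 < 1 / lam - c) (hlt : (1 / lam - c)⁻¹ < h) :
    min (max (1 / lam - 1 / h) 0) c = c := by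
  have : 1 / h < 1 / lam - c := by
    rw [one_div]
    exact inv_lt_of_inv_lt₀ hgap hlt
  exact min_eq_right (le_max_of_le_left (by linarith))

end Clipped

section Probability

variable {Ω : Type*} [MeasurableSpace Ω] {μ : Measure Ω} [IsProbabilityMeasure μ] {H : Ω → ℝ}

lemma probReal_lt_eq_one_sub (hH : Measurable H) (t : ℝ) :
    μ.real {ω | t < H ω} = 1 - μ.real {ω | H ω ≤ t} := by
  have : {ω | t < H ω} = {ω | H ω ≤ t}ᶜ := by ext; simp
  rw [this, probReal_compl_eq_one_sub (s := {ω | H ω ≤ t}) (hH measurableSet_Iic)]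

lemma ae_pos_of_continuousAt_cdf (hH : ∀ ω, 0 ≤ H ω)
    (hcont : ContinuousAt (fun x => μ.real {ω | H ω ≤ x}) 0) : ∀ᵐ ω ∂μ, 0 < H ω := by
  have hzero : ∀ x < 0, μ.real {ω | H ω ≤ x} = 0 := fun x hx => by
    have : {ω | H ω ≤ x} = ∅ :=
      eq_empty_of_forall_notMem fun ω (hω : H ω ≤ x) => by linarith [hH ω]
    rw [this, measureReal_empty]
  have h0 : μ.real {ω | H ω ≤ 0} = 0 :=
    tendsto_nhds_unique (hcont.tendsto.mono_left (nhdsWithin_le_nhds (s := Iio 0)))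
      (tendsto_const_nhds.congr' (eventually_nhdsWithin_of_forall fun x hx => (hzero x hx).symm))
  rw [ae_iff]
  simpa only [not_lt] using (measureReal_eq_zero_iff).mp h0

variable {lam c : ℝ}

lemma integrable_clipped (hH : Measurable H) (hc : 0 ≤ c) :
    Integrable (fun ω => min (max (1 / lam - 1 / H ω) 0) c) μ := by
  have hmeas : Measurable fun ω => min (max (1 / lam - 1 / H ω) 0) c :=
    ((measurable_const.sub (measurable_const.div hH)).max measurable_const).min measurable_const
  refine Integrable.of_bound hmeas.aestronglyMeasurable c (Eventually.of_forall fun ω => ?_)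
  rw [Real.norm_of_nonneg (le_min (le_max_right _ _) hc)]
  exact min_le_right _ _

/-- On `{H = 0}` the junk value `1 / 0 = 0` makes the integrand equal to `c`. -/
lemma integral_clipped_le (hH : Measurable H) (hpos : ∀ᵐ ω ∂μ, 0 < H ω) (hc : 0 ≤ c) :
    ∫ ω, min (max (1 / lam - 1 / H ω) 0) c ∂μ ≤ c * μ.real {ω | lam < H ω} := by
  have hs : MeasurableSet {ω | lam < H ω} := measurableSet_lt measurable_const hH
  calc _ ≤ ∫ ω, {ω | lam < H ω}.indicator (fun _ => c) ω ∂μ := by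
        refine integral_mono_ae (integrable_clipped hH hc) ((integrable_const c).indicator hs) ?_
        filter_upwards [hpos] with ω hω
        by_cases h : ω ∈ {ω | lam < H ω}
        · rw [indicator_of_mem h]
          exact min_le_right _ _
        · rw [indicator_of_notMem h, clipped_eq_zero hω (not_lt.1 h) hc]
    _ = c * μ.real {ω | lam < H ω} := by rw [integral_indicator_const _ hs, smul_eq_mul, mul_comm]

lemma mul_probReal_le_integral_clipped (hH : Measurable H) (hc : 0 ≤ c)
    (hgap : 0 < 1 / lam - c) :
    c * μ.real {ω | (1 / lam - c)⁻¹ < H ω} ≤ ∫ ω, min (max (1 / lam - 1 / H ω) 0) c ∂μ := by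
  have hs : MeasurableSet {ω | (1 / lam - c)⁻¹ < H ω} := measurableSet_lt measurable_const hH
  calc c * μ.real {ω | (1 / lam - c)⁻¹ < H ω}
      = ∫ ω, {ω | (1 / lam - c)⁻¹ < H ω}.indicator (fun _ => c) ω ∂μ := by
        rw [integral_indicator_const _ hs, smul_eq_mul, mul_comm]
    _ ≤ _ := by
        refine integral_mono ((integrable_const c).indicator hs) (integrable_clipped hH hc)
          fun ω => ?_
        by_cases h : ω ∈ {ω | (1 / lam - c)⁻¹ < H ω}
        · rw [indicator_of_mem h, clipped_eq_cap hgap h]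
        · rw [indicator_of_notMem h]
          exact le_min (le_max_right _ _) hc

end Probability

section Arithmetic

variable {A S x : ℝ}

lemma le_mul_mul_one_sub_iff (hA : 0 < A) (hS : 0 < S) :
    S ≤ A * S * (1 - x) ↔ x ≤ 1 - 1 / A := by
  rw [show A * S * (1 - x) = A * (1 - x) * S by ring, le_mul_iff_one_le_left hS,
    ← div_le_iff₀' hA]
  constructor <;> intro <;> linarith

lemma mul_mul_one_sub_le_iff (hA : 0 < A) (hS : 0 < S) :
    A * S * (1 - x) ≤ S ↔ 1 - 1 / A ≤ x := by
  rw [show A * S * (1 - x) = A * (1 - x) * S by ring, mul_le_iff_le_one_left hS,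
    ← le_div_iff₀' hA]
  constructor <;> intro <;> linarith

lemma div_one_add_mul_le {lam a q : ℝ} (hlam : 0 < lam) (hq : 0 ≤ q) (ha : 0 ≤ a)
    (hgap : 0 < 1 / lam - a) (hqr : q ≤ (1 / lam - a)⁻¹) : q / (1 + a * q) ≤ lam := by
  have h1 : q * (1 / lam - a) ≤ 1 :=
    calc q * (1 / lam - a) ≤ (1 / lam - a)⁻¹ * (1 / lam - a) :=
          mul_le_mul_of_nonneg_right hqr hgap.le
      _ = 1 := inv_mul_cancel₀ hgap.ne'
  have h2 : q * (1 / lam - a) * lam = q - a * q * lam := by field_simp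
  rw [div_le_iff₀ (by positivity)]
  nlinarith [mul_le_mul_of_nonneg_right h1 hlam.le]

end Arithmetic

theorem stmt4 {Ω : Type*} [MeasureSpace Ω] [IsProbabilityMeasure (volume : Measure Ω)]
    (H : Ω → ℝ) (hHmeas : Measurable H) (hHnn : ∀ ω, 0 ≤ H ω)
    (F : ℝ → ℝ) (hF : ∀ x, F x = (volume {ω | H ω ≤ x}).toReal)
    (hFc : Continuous F) (hFsm : StrictMonoOn F (Set.Ici 0))
    (Finv : ℝ → ℝ) (hFinv : ∀ p, 0 ≤ p → p < 1 → F (Finv p) = p)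
    (lam S A : ℝ) (hlam : 0 < lam) (hS : 0 < S) (hA : 1 ≤ A)
    (hpeak : lam * A * S < 1)
    (hconstraint : S = ∫ ω, min (max (1 / lam - 1 / H ω) 0) (A * S)) :
    Finv (1 - 1 / A) / (1 + A * S * Finv (1 - 1 / A)) ≤ lam ∧
      lam ≤ Finv (1 - 1 / A) := by
  have hF' : ∀ x, F x = (volume : Measure Ω).real {ω | H ω ≤ x} := hF
  have hA0 : 0 < A := by linarith
  have hAS : 0 < A * S := by positivity
  have hgap : 0 < 1 / lam - A * S := by rw [sub_pos, lt_div_iff₀ hlam]; linarith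
  have hpos : ∀ᵐ ω, 0 < H ω :=
    ae_pos_of_continuousAt_cdf hHnn (funext hF' ▸ hFc.continuousAt)
  have hFlam : F lam ≤ 1 - 1 / A := by
    have := hconstraint.trans_le (integral_clipped_le hHmeas hpos hAS.le)
    rwa [probReal_lt_eq_one_sub hHmeas, ← hF', le_mul_mul_one_sub_iff hA0 hS] at this
  have hFr : 1 - 1 / A ≤ F (1 / lam - A * S)⁻¹ := by
    have := (mul_probReal_le_integral_clipped hHmeas hAS.le hgap).trans_eq hconstraint.symm
    rwa [probReal_lt_eq_one_sub hHmeas, ← hF', mul_mul_one_sub_le_iff hA0 hS] at this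
  set q := Finv (1 - 1 / A)
  have hFq : F q = 1 - 1 / A :=
    hFinv _ (sub_nonneg.2 ((div_le_one hA0).2 hA)) (by linarith [one_div_pos.2 hA0])
  have hq0 : 0 ≤ q := by
    by_contra! hq
    have hFq0 : F q ≤ F 0 := by
      rw [hF', hF']
      exact measureReal_mono fun ω (hω : H ω ≤ q) => hω.trans hq.le
    linarith [hFsm (self_mem_Ici (a := (0 : ℝ))) hlam.le hlam]
  refine ⟨div_one_add_mul_le hlam hq0 hAS.le hgap ?_, ?_⟩
  · exact (hFsm.le_iff_le hq0 (inv_pos.2 hgap).le).1 (hFq.trans_le hFr)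
  · exact (hFsm.le_iff_le hlam.le hq0).1 (hFlam.trans_eq hFq.symm)
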